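/- arXiv:0907.5363 — 2 statements merged into one kernel-verified Lean document; each statement's English description precedes it below -/
import Mathlib

section
/- Let (X,d) be a compact metric space and Φ : [0,+∞) × X → X a continuous semi-flow (Φ⁰ = id and Φˢ ∘ Φᵗ = Φ^{s+t} for all s,t ≥ 0), and let φ = Φ¹ be its time-one map. Then the continuous complexity index equals the discrete one: C_c(Φ) = C(φ). -/
/-!
Write `φ = Φ¹`, so that `φ^[k] = Φ^k`. For `n ≤ t` every `d_t^Φ`-ball lies in the `d_n^φ`-ball of
the same radius, hence `G_n(ε) ≤ G_n^Φ(ε)`. Conversely, uniform continuity of `Φ` on `[0,1] × X`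
gives `δ > 0` such that `d(x,y) < δ` implies `d(Φ^r x, Φ^r y) < ε/2` for all `r ≤ 1`; writing
`τ = r + ⌊τ⌋` shows that a `d_n^φ`-ball of radius `δ` lies in a `d_t^Φ`-ball of radius `ε` as soon as
`t ≤ n`, hence `G_t^Φ(ε) ≤ G_{⌈t⌉}(δ)`. Since `log ⌈t⌉ / log t → 1`, the growth exponents of the
two covering numbers are comparable scale by scale, and taking the supremum over the scale gives
equality.
-/

open Filter Set Metric
open scoped ENNReal NNReal Topology

/-- The dynamical distance of order `n` associated with the map `φ`:
`d_n^φ(x,y) = max_{0 ≤ k ≤ n-1} d(φ^k x, φ^k y)`. -/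
noncomputable def dynDist {X : Type*} [MetricSpace X] (φ : X → X) (n : ℕ) (x y : X) : ℝ :=
  ⨆ k : Fin n, dist (φ^[(k : ℕ)] x) (φ^[(k : ℕ)] y)

/-- The open `(n,ε)`-ball centered at `x` for the dynamical distance `d_n^φ`. -/
def dynBall {X : Type*} [MetricSpace X] (φ : X → X) (n : ℕ) (x : X) (ε : ℝ) : Set X :=
  {y | dynDist φ n x y < ε}

/-- `G_n(Y,ε)`: the minimal number of `(n,ε)`-balls (centers anywhere in `X`)
needed to cover `Y`. -/
noncomputable def coverNum {X : Type*} [MetricSpace X] (φ : X → X) (n : ℕ) (Y : Set X)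
    (ε : ℝ) : ℕ :=
  sInf {m : ℕ | ∃ t : Finset X, t.card = m ∧ Y ⊆ ⋃ x ∈ t, dynBall φ n x ε}

/-- The (upper) complexity index `C(φ,Y) = sup_{ε>0} limsup_n log G_n(Y,ε) / log n`. -/
noncomputable def upperComplexity {X : Type*} [MetricSpace X] (φ : X → X) (Y : Set X) : ℝ≥0∞ :=
  ⨆ (ε : ℝ) (_ : 0 < ε),
    Filter.limsup
      (fun n : ℕ => ENNReal.ofReal (Real.log (coverNum φ n Y ε) / Real.log n)) Filter.atTop

/-- The lower complexity index `C̲(φ,Y) = sup_{ε>0} liminf_n log G_n(Y,ε) / log n`. -/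
noncomputable def lowerComplexity {X : Type*} [MetricSpace X] (φ : X → X) (Y : Set X) : ℝ≥0∞ :=
  ⨆ (ε : ℝ) (_ : 0 < ε),
    Filter.liminf
      (fun n : ℕ => ENNReal.ofReal (Real.log (coverNum φ n Y ε) / Real.log n)) Filter.atTop

/-- The weight `M(C,s) = Σ_i (1/n_i)^s` of a (countable) family of dynamical balls, the
family being encoded as a set of pairs `(center, order)`. -/
noncomputable def coverWeight {X : Type*} [MetricSpace X] (s : ℝ) (S : Set (X × ℕ)) : ℝ≥0∞ :=
  ∑' p : S, ((p : X × ℕ).2 : ℝ≥0∞)⁻¹ ^ s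

/-- A covering of `Y` of order `≥ N` at scale `ε`: a countable family of `(n_i,ε)`-balls
with all `n_i ≥ N` whose union contains `Y`. -/
def IsDynCover {X : Type*} [MetricSpace X] (φ : X → X) (Y : Set X) (ε : ℝ) (N : ℕ)
    (S : Set (X × ℕ)) : Prop :=
  S.Countable ∧ (∀ p ∈ S, N ≤ p.2) ∧ Y ⊆ ⋃ p ∈ S, dynBall φ p.2 p.1 ε

/-- `δ(Y,ε,s,N)`: the infimum of the weights of coverings of `Y` of order `≥ N`. -/
noncomputable def dynDelta {X : Type*} [MetricSpace X] (φ : X → X) (Y : Set X) (ε s : ℝ)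
    (N : ℕ) : ℝ≥0∞ :=
  ⨅ (S : Set (X × ℕ)) (_ : IsDynCover φ Y ε N S), coverWeight s S

/-- `Δ(Y,ε,s) = sup_{N ≥ 1} δ(Y,ε,s,N)`. -/
noncomputable def dynDeltaSup {X : Type*} [MetricSpace X] (φ : X → X) (Y : Set X)
    (ε s : ℝ) : ℝ≥0∞ :=
  ⨆ (N : ℕ) (_ : 1 ≤ N), dynDelta φ Y ε s N

/-- The critical value `s_c(Y,ε) = inf {s ≥ 0 | Δ(Y,ε,s) = 0}`, as an element of `[0,∞]`
(with `inf ∅ = +∞`). -/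
noncomputable def critVal {X : Type*} [MetricSpace X] (φ : X → X) (Y : Set X) (ε : ℝ) : ℝ≥0∞ :=
  sInf {c : ℝ≥0∞ | ∃ s : ℝ, 0 ≤ s ∧ c = ENNReal.ofReal s ∧ dynDeltaSup φ Y ε s = 0}

/-- The weak complexity index `C*(φ,Y) = sup_{ε>0} s_c(Y,ε)`. -/
noncomputable def weakComplexity {X : Type*} [MetricSpace X] (φ : X → X) (Y : Set X) : ℝ≥0∞ :=
  ⨆ (ε : ℝ) (_ : 0 < ε), critVal φ Y ε

/-- The continuous-time dynamical distance `d_t^Φ(x,y) = sup_{0 ≤ τ ≤ t-1} d(Φ^τ x, Φ^τ y)`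
associated with a semi-flow `Φ : [0,∞) × X → X`. -/
noncomputable def flowDist {X : Type*} [MetricSpace X] (Φ : ℝ≥0 × X → X) (t : ℝ)
    (x y : X) : ℝ :=
  ⨆ τ : {τ : ℝ≥0 // (τ : ℝ) ≤ t - 1}, dist (Φ (τ.1, x)) (Φ (τ.1, y))

/-- The open ball of radius `ε` centered at `x` for the distance `d_t^Φ`. -/
def flowBall {X : Type*} [MetricSpace X] (Φ : ℝ≥0 × X → X) (t : ℝ) (x : X) (ε : ℝ) :
    Set X :=
  {y | flowDist Φ t x y < ε}

/-- `G_t^Φ(ε)`: the minimal number of `d_t^Φ`-balls of radius `ε` needed to cover `X`. -/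
noncomputable def flowCoverNum {X : Type*} [MetricSpace X] (Φ : ℝ≥0 × X → X)
    (t ε : ℝ) : ℕ :=
  sInf {m : ℕ | ∃ u : Finset X, u.card = m ∧ Set.univ ⊆ ⋃ x ∈ u, flowBall Φ t x ε}

/-- The continuous complexity index `C_c(Φ) = sup_{ε>0} limsup_{t→∞} log G_t^Φ(ε)/log t`. -/
noncomputable def flowComplexity {X : Type*} [MetricSpace X] (Φ : ℝ≥0 × X → X) : ℝ≥0∞ :=
  ⨆ (ε : ℝ) (_ : 0 < ε),
    Filter.limsup
      (fun t : ℝ => ENNReal.ofReal (Real.log (flowCoverNum Φ t ε) / Real.log t)) Filter.atTop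

open Function Real

section CoverCard

variable {X : Type*}

noncomputable def coverCard (B : X → Set X) : ℕ :=
  sInf {m : ℕ | ∃ u : Finset X, u.card = m ∧ univ ⊆ ⋃ x ∈ u, B x}

-- The hypothesis `hA` matters because `sInf ∅ = 0`.
lemma coverCard_le_of_subset {A B : X → Set X} (hAB : ∀ x, A x ⊆ B x)
    (hA : ∃ u : Finset X, univ ⊆ ⋃ x ∈ u, A x) : coverCard B ≤ coverCard A := by
  obtain ⟨u, hu⟩ := hA
  obtain ⟨v, hv, hcover⟩ := Nat.sInf_mem (s := {m : ℕ | ∃ u : Finset X, u.card = m ∧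
    univ ⊆ ⋃ x ∈ u, A x}) ⟨u.card, u, rfl, hu⟩
  exact Nat.sInf_le ⟨v, hv, hcover.trans (iUnion₂_mono fun x _ => hAB x)⟩

end CoverCard

section DynamicalBalls

variable {X : Type*} [MetricSpace X] {φ : X → X} {n : ℕ} {x y : X} {ε : ℝ}

lemma dist_iterate_le_dynDist (k : Fin n) : dist (φ^[k] x) (φ^[k] y) ≤ dynDist φ n x y :=
  le_ciSup (f := fun k : Fin n => dist (φ^[k] x) (φ^[k] y)) (finite_range _).bddAbove k

lemma dynDist_lt_iff (hε : 0 < ε) :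
    dynDist φ n x y < ε ↔ ∀ k : Fin n, dist (φ^[k] x) (φ^[k] y) < ε := by
  refine ⟨fun h k => (dist_iterate_le_dynDist k).trans_lt h, fun h => ?_⟩
  rcases isEmpty_or_nonempty (Fin n) with hn | hn
  · rwa [dynDist, Real.iSup_of_isEmpty]
  · obtain ⟨k, hk⟩ := Finite.exists_max fun k : Fin n => dist (φ^[k] x) (φ^[k] y)
    exact (ciSup_le hk).trans_lt (h k)

lemma isOpen_dynBall (hφ : Continuous φ) (hε : 0 < ε) (n : ℕ) (x : X) :
    IsOpen (dynBall φ n x ε) := by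
  have hball : dynBall φ n x ε = ⋂ k : Fin n, φ^[k] ⁻¹' ball (φ^[k] x) ε := by
    ext y
    simp only [dynBall, mem_ofPred_eq, dynDist_lt_iff hε, mem_iInter, mem_preimage, mem_ball,
      dist_comm]
  rw [hball]
  exact isOpen_iInter_of_finite fun k => isOpen_ball.preimage (hφ.iterate k)

lemma exists_finset_univ_subset_dynBall [CompactSpace X] (hφ : Continuous φ) (hε : 0 < ε)
    (n : ℕ) : ∃ u : Finset X, univ ⊆ ⋃ x ∈ u, dynBall φ n x ε :=
  isCompact_univ.elim_finite_subcover _ (fun x => isOpen_dynBall hφ hε n x) fun x _ =>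
    mem_iUnion.2 ⟨x, (dynDist_lt_iff hε).2 fun k => by simpa using hε⟩

end DynamicalBalls

lemma iterate_timeOne {X : Type*} {Φ : ℝ≥0 × X → X} (hid : ∀ x, Φ (0, x) = x)
    (hsemi : ∀ (s t : ℝ≥0) (x : X), Φ (s, Φ (t, x)) = Φ (s + t, x)) (k : ℕ) (x : X) :
    (fun x => Φ (1, x))^[k] x = Φ (k, x) := by
  induction k with
  | zero => simp [hid]
  | succ k ih => rw [iterate_succ_apply', ih, hsemi, Nat.cast_succ, add_comm]

section Semiflow

variable {X : Type*} [MetricSpace X] {Φ : ℝ≥0 × X → X} {ε : ℝ}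

lemma dynDist_le_flowDist [BoundedSpace X] (hid : ∀ x, Φ (0, x) = x)
    (hsemi : ∀ (s t : ℝ≥0) (x : X), Φ (s, Φ (t, x)) = Φ (s + t, x))
    {n : ℕ} {t : ℝ} (hnt : n ≤ t) (x y : X) :
    dynDist (fun x => Φ (1, x)) n x y ≤ flowDist Φ t x y := by
  refine Real.iSup_le (fun k => ?_) (Real.iSup_nonneg fun _ => dist_nonneg)
  have hk : ((k : ℝ≥0) : ℝ) ≤ t - 1 := by
    have : (k : ℝ) + 1 ≤ n := by exact_mod_cast k.2
    push_cast
    linarith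
  rw [iterate_timeOne hid hsemi, iterate_timeOne hid hsemi]
  -- `flowDist` is a supremum in `ℝ`, so boundedness of `X` is needed to compare with its terms.
  refine le_ciSup (f := fun τ : {τ : ℝ≥0 // (τ : ℝ) ≤ t - 1} => dist (Φ (τ.1, x)) (Φ (τ.1, y)))
    ⟨diam (univ : Set X), ?_⟩ ⟨k, hk⟩
  rintro _ ⟨τ, rfl⟩
  exact dist_le_diam_of_mem (Bornology.IsBounded.all univ) trivial trivial

lemma exists_dist_flow_lt [CompactSpace X] (hΦ : Continuous Φ) (hε : 0 < ε) :
    ∃ δ > 0, ∀ τ ≤ 1, ∀ x y : X, dist x y < δ → dist (Φ (τ, x)) (Φ (τ, y)) < ε := by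
  have hunif := CompactSpace.uniformContinuous_of_continuous
    (hΦ.comp (continuous_subtype_val.prodMap continuous_id) :
      Continuous fun p : Icc (0 : ℝ≥0) 1 × X => Φ (p.1, p.2))
  obtain ⟨δ, hδ, hδε⟩ := Metric.uniformContinuous_iff.1 hunif ε hε
  refine ⟨δ, hδ, fun τ hτ x y hxy => ?_⟩
  have hτ' : τ ∈ Icc (0 : ℝ≥0) 1 := ⟨zero_le, hτ⟩
  refine hδε (a := (⟨τ, hτ'⟩, x)) (b := (⟨τ, hτ'⟩, y)) ?_
  simpa [Prod.dist_eq] using max_lt hδ hxy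

lemma flowDist_le_of_dynDist_lt (hid : ∀ x, Φ (0, x) = x)
    (hsemi : ∀ (s t : ℝ≥0) (x : X), Φ (s, Φ (t, x)) = Φ (s + t, x)) {δ : ℝ} (hε : 0 ≤ ε)
    (hδ : ∀ τ ≤ 1, ∀ x y : X, dist x y < δ → dist (Φ (τ, x)) (Φ (τ, y)) < ε)
    {n : ℕ} {t : ℝ} (htn : t ≤ n) {x y : X} (hxy : dynDist (fun x => Φ (1, x)) n x y < δ) :
    flowDist Φ t x y ≤ ε := by
  refine Real.iSup_le (fun ⟨τ, hτ⟩ => ?_) hε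
  dsimp only
  set k := ⌊τ⌋₊
  have hkτ : (k : ℝ≥0) ≤ τ := Nat.floor_le τ.2
  have hkn : k < n := by
    have : (k : ℝ) ≤ τ := by exact_mod_cast hkτ
    exact_mod_cast (show (k : ℝ) < n by linarith)
  have hr : τ - k ≤ 1 := tsub_le_iff_left.2 (Nat.lt_floor_add_one τ).le
  rw [← tsub_add_cancel_of_le hkτ, ← hsemi, ← hsemi, ← iterate_timeOne hid hsemi,
    ← iterate_timeOne hid hsemi]
  exact (hδ _ hr _ _ ((dist_iterate_le_dynDist ⟨k, hkn⟩).trans_lt hxy)).le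

lemma flowBall_subset_dynBall [BoundedSpace X] (hid : ∀ x, Φ (0, x) = x)
    (hsemi : ∀ (s t : ℝ≥0) (x : X), Φ (s, Φ (t, x)) = Φ (s + t, x))
    {n : ℕ} {t : ℝ} (hnt : n ≤ t) (x : X) :
    flowBall Φ t x ε ⊆ dynBall (fun x => Φ (1, x)) n x ε :=
  fun y hy => (dynDist_le_flowDist hid hsemi hnt x y).trans_lt hy

lemma exists_dynBall_subset_flowBall [CompactSpace X] (hΦ : Continuous Φ)
    (hid : ∀ x, Φ (0, x) = x)
    (hsemi : ∀ (s t : ℝ≥0) (x : X), Φ (s, Φ (t, x)) = Φ (s + t, x)) (hε : 0 < ε) :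
    ∃ δ > 0, ∀ {n : ℕ} {t : ℝ}, t ≤ n → ∀ x,
      dynBall (fun x => Φ (1, x)) n x δ ⊆ flowBall Φ t x ε := by
  obtain ⟨δ, hδ, hδε⟩ := exists_dist_flow_lt hΦ (half_pos hε)
  exact ⟨δ, hδ, fun htn x y hy =>
    (flowDist_le_of_dynDist_lt hid hsemi (half_pos hε).le hδε htn hy).trans_lt (half_lt_self hε)⟩

end Semiflow

section CoveringNumbers

variable {X : Type*} [MetricSpace X] [CompactSpace X] {Φ : ℝ≥0 × X → X} {ε : ℝ}

lemma coverNum_le_flowCoverNum (hΦ : Continuous Φ) (hid : ∀ x, Φ (0, x) = x)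
    (hsemi : ∀ (s t : ℝ≥0) (x : X), Φ (s, Φ (t, x)) = Φ (s + t, x)) (hε : 0 < ε) (n : ℕ) :
    coverNum (fun x => Φ (1, x)) n univ ε ≤ flowCoverNum Φ n ε := by
  obtain ⟨δ, hδ, hsub⟩ := exists_dynBall_subset_flowBall hΦ hid hsemi hε
  obtain ⟨u, hu⟩ := exists_finset_univ_subset_dynBall (φ := fun x => Φ (1, x)) (by fun_prop) hδ n
  exact coverCard_le_of_subset (flowBall_subset_dynBall hid hsemi le_rfl)
    ⟨u, hu.trans (iUnion₂_mono fun x _ => hsub le_rfl x)⟩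

lemma exists_flowCoverNum_le_coverNum_natCeil (hΦ : Continuous Φ) (hid : ∀ x, Φ (0, x) = x)
    (hsemi : ∀ (s t : ℝ≥0) (x : X), Φ (s, Φ (t, x)) = Φ (s + t, x)) (hε : 0 < ε) :
    ∃ δ > 0, ∀ t : ℝ, flowCoverNum Φ t ε ≤ coverNum (fun x => Φ (1, x)) ⌈t⌉₊ univ δ := by
  obtain ⟨δ, hδ, hsub⟩ := exists_dynBall_subset_flowBall hΦ hid hsemi hε
  exact ⟨δ, hδ, fun t => coverCard_le_of_subset (hsub (Nat.le_ceil t))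
    (exists_finset_univ_subset_dynBall (φ := fun x => Φ (1, x)) (by fun_prop) hδ _)⟩

end CoveringNumbers

section LogGrowth

lemma log_natCast_monotone : Monotone fun n : ℕ => log n := by
  intro m n hmn
  rcases m.eq_zero_or_pos with rfl | hm
  · simpa using log_natCast_nonneg n
  · exact log_le_log (by exact_mod_cast hm) (by exact_mod_cast hmn)

lemma tendsto_log_natCeil_div_log : Tendsto (fun t : ℝ => log ⌈t⌉₊ / log t) atTop (𝓝 1) := by
  have hupper : Tendsto (fun t : ℝ => 1 + log 2 / log t) atTop (𝓝 1) := by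
    simpa using tendsto_const_nhds.add (tendsto_const_nhds.div_atTop tendsto_log_atTop)
  refine tendsto_of_tendsto_of_tendsto_of_le_of_le' tendsto_const_nhds hupper ?_ ?_
  · filter_upwards [eventually_gt_atTop 1] with t ht
    rw [le_div_iff₀ (log_pos ht), one_mul]
    exact log_le_log (by linarith) (Nat.le_ceil t)
  · filter_upwards [eventually_gt_atTop 1] with t ht
    have hlog : 0 < log t := log_pos ht
    rw [div_le_iff₀ hlog, add_mul, one_mul, div_mul_cancel₀ _ hlog.ne',
      ← log_mul (by linarith) two_ne_zero]
    exact log_le_log (by linarith [Nat.le_ceil t])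
      (by linarith [Nat.ceil_lt_add_one (by linarith : 0 ≤ t)])

lemma limsup_ofReal_div_log_natCeil_le {u : ℕ → ℝ} (hu : ∀ n, 0 ≤ u n) :
    limsup (fun t : ℝ => ENNReal.ofReal (u ⌈t⌉₊ / log t)) atTop ≤
      limsup (fun n : ℕ => ENNReal.ofReal (u n / log n)) atTop := by
  set v := fun n : ℕ => ENNReal.ofReal (u n / log n)
  set r := fun t : ℝ => ENNReal.ofReal (log ⌈t⌉₊ / log t)
  have hr : limsup r atTop = 1 := by
    simpa using (ENNReal.tendsto_ofReal tendsto_log_natCeil_div_log).limsup_eq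
  have hsplit : (fun t : ℝ => ENNReal.ofReal (u ⌈t⌉₊ / log t)) =ᶠ[atTop] (v ∘ Nat.ceil) * r := by
    filter_upwards [eventually_gt_atTop 1] with t ht
    have hceil : 0 < log ⌈t⌉₊ := log_pos (by linarith [Nat.le_ceil t])
    rw [Pi.mul_apply, comp_apply, ← ENNReal.ofReal_mul (div_nonneg (hu _) hceil.le),
      div_mul_div_cancel₀ hceil.ne']
  calc limsup (fun t : ℝ => ENNReal.ofReal (u ⌈t⌉₊ / log t)) atTop
      = limsup ((v ∘ Nat.ceil) * r) atTop := limsup_congr hsplit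
    _ ≤ limsup (v ∘ Nat.ceil) atTop * limsup r atTop :=
      ENNReal.limsup_mul_le' (by simp [hr]) (by simp [hr])
    _ ≤ limsup v atTop := by
      rw [hr, mul_one]
      exact tendsto_nat_ceil_atTop.limsup_comp_le_limsup

end LogGrowth

section ComplexityIndices

variable {X : Type*} [MetricSpace X] [CompactSpace X] {Φ : ℝ≥0 × X → X} {ε : ℝ}

lemma limsup_log_coverNum_le_limsup_log_flowCoverNum (hΦ : Continuous Φ)
    (hid : ∀ x, Φ (0, x) = x)
    (hsemi : ∀ (s t : ℝ≥0) (x : X), Φ (s, Φ (t, x)) = Φ (s + t, x)) (hε : 0 < ε) :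
    limsup (fun n : ℕ =>
        ENNReal.ofReal (log (coverNum (fun x => Φ (1, x)) n univ ε) / log n)) atTop ≤
      limsup (fun t : ℝ => ENNReal.ofReal (log (flowCoverNum Φ t ε) / log t)) atTop := by
  refine (limsup_le_limsup (Eventually.of_forall fun n => ?_)).trans
    (tendsto_natCast_atTop_atTop.limsup_comp_le_limsup (u := fun t : ℝ =>
      ENNReal.ofReal (log (flowCoverNum Φ t ε) / log t)))
  exact ENNReal.ofReal_le_ofReal <| div_le_div_of_nonneg_right
    (log_natCast_monotone (coverNum_le_flowCoverNum hΦ hid hsemi hε n)) (log_natCast_nonneg n)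

lemma exists_limsup_log_flowCoverNum_le (hΦ : Continuous Φ) (hid : ∀ x, Φ (0, x) = x)
    (hsemi : ∀ (s t : ℝ≥0) (x : X), Φ (s, Φ (t, x)) = Φ (s + t, x)) (hε : 0 < ε) :
    ∃ δ > 0,
      limsup (fun t : ℝ => ENNReal.ofReal (log (flowCoverNum Φ t ε) / log t)) atTop ≤
        limsup (fun n : ℕ =>
          ENNReal.ofReal (log (coverNum (fun x => Φ (1, x)) n univ δ) / log n)) atTop := by
  obtain ⟨δ, hδ, hG⟩ := exists_flowCoverNum_le_coverNum_natCeil hΦ hid hsemi hε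
  refine ⟨δ, hδ, (limsup_le_limsup ?_).trans
    (limsup_ofReal_div_log_natCeil_le fun n => log_natCast_nonneg _)⟩
  filter_upwards [eventually_ge_atTop 1] with t ht
  exact ENNReal.ofReal_le_ofReal
    (div_le_div_of_nonneg_right (log_natCast_monotone (hG t)) (log_nonneg ht))

end ComplexityIndices

/-- for a continuous semi-flow `Φ` on a compact metric space with time-one
map `φ = Φ¹`, the continuous complexity index equals the discrete one: `C_c(Φ) = C(φ)`. -/
theorem flowComplexity_eq_upperComplexity {X : Type*} [MetricSpace X] [CompactSpace X]
    (Φ : ℝ≥0 × X → X) (hΦ : Continuous Φ)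
    (hid : ∀ x, Φ (0, x) = x)
    (hsemi : ∀ (s t : ℝ≥0) (x : X), Φ (s, Φ (t, x)) = Φ (s + t, x)) :
    flowComplexity Φ = upperComplexity (fun x => Φ (1, x)) Set.univ := by
  apply le_antisymm
  · refine iSup₂_le fun ε hε => ?_
    obtain ⟨δ, hδ, hle⟩ := exists_limsup_log_flowCoverNum_le hΦ hid hsemi hε
    exact le_iSup₂_of_le δ hδ hle
  · exact iSup₂_mono fun ε hε => limsup_log_coverNum_le_limsup_log_flowCoverNum hΦ hid hsemi hε
end

section
/- Let (E,d) and (X,δ) be compact metric spaces and φ : E → E, ψ : X → X continuous maps such that (E,φ) has a contracting fibered structure over (X,ψ). Then C(φ) = C(ψ). -/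
open Filter Set Metric
open scoped ENNReal NNReal Topology

/-!
Since `π` semiconjugates `φ` to `ψ` and is uniformly continuous, an `(n, η)`-cover of `E`
projects to an `(n, ε)`-cover of `X`, so `C(ψ) ≤ C(φ)`.

Conversely, let `δ` be a Lebesgue number of the covering `(U i)`, `r = min ε δ`, and `N` a finite
`r`-net of the fiber `F` (which is totally bounded, being isometric to a subset of the compact
space `E`). If `π y` and `π z` stay `r`-close for `n` steps, then at each step `φ^k y` and
`φ^k z` lie in a common chart, where their distance is the maximum of the base distance and the
fiber distance, and the latter never increases along the orbit by the contraction hypothesis.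
So lifting each center of an `(n, r)`-cover of `X` to the `|N|` points of its chart with fiber
coordinate in `N` gives `G_n^φ(ε) ≤ |N| G_n^ψ(r)`, and the constant `|N|` disappears in
`log G_n / log n`.
-/

section Dynamics

variable {Y : Type*} [MetricSpace Y] {φ : Y → Y} {n : ℕ} {x y : Y} {ε : ℝ}

lemma mem_dynBall_iff (hε : 0 < ε) :
    y ∈ dynBall φ n x ε ↔ ∀ k < n, dist (φ^[k] x) (φ^[k] y) < ε := by
  rcases n.eq_zero_or_pos with rfl | hn
  · simp [dynBall, dynDist, hε]
  have : Nonempty (Fin n) := ⟨⟨0, hn⟩⟩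
  set d : Fin n → ℝ := fun k => dist (φ^[(k : ℕ)] x) (φ^[(k : ℕ)] y)
  change ⨆ k, d k < ε ↔ _
  refine ⟨fun h k hk => (le_ciSup (Finite.bddAbove_range d) ⟨k, hk⟩).trans_lt h, fun h => ?_⟩
  obtain ⟨k₀, hk₀⟩ := exists_eq_ciSup_of_finite (f := d)
  rw [← hk₀]
  exact h k₀ k₀.2

lemma dynBall_mem_nhds (hφ : Continuous φ) (hε : 0 < ε) : dynBall φ n x ε ∈ 𝓝 x := by
  have hk : ∀ k : Fin n, ∀ᶠ y in 𝓝 x, dist (φ^[k] x) (φ^[k] y) < ε := fun k =>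
    (continuous_const.dist (hφ.iterate k)).continuousAt.eventually_lt continuousAt_const
      (by simpa using hε)
  filter_upwards [eventually_all.2 hk] with y hy
  exact (mem_dynBall_iff hε).2 fun k hkn => hy ⟨k, hkn⟩

lemma coverNum_le_card {S : Set Y} {t : Finset Y} (h : S ⊆ ⋃ x ∈ t, dynBall φ n x ε) :
    coverNum φ n S ε ≤ t.card :=
  Nat.sInf_le ⟨t, rfl, h⟩

lemma exists_card_eq_coverNum [CompactSpace Y] (hφ : Continuous φ) (n : ℕ) (hε : 0 < ε) :
    ∃ t : Finset Y, t.card = coverNum φ n univ ε ∧ univ ⊆ ⋃ x ∈ t, dynBall φ n x ε := by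
  obtain ⟨t, -, ht⟩ := isCompact_univ.elim_nhds_subcover (fun x => dynBall φ n x ε)
    fun x _ => dynBall_mem_nhds hφ hε
  exact Nat.sInf_mem (s := {m | ∃ t : Finset Y, t.card = m ∧ univ ⊆ ⋃ x ∈ t, dynBall φ n x ε})
    ⟨t.card, t, rfl, ht⟩

lemma mapsTo_dynBall {Z : Type*} [MetricSpace Z] {ψ : Z → Z} {π : Y → Z}
    (hsemi : Function.Semiconj π φ ψ) {η : ℝ} (hη : 0 < η) (hε : 0 < ε)
    (hπ : ∀ ⦃y y'⦄, dist y y' < η → dist (π y) (π y') < ε) :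
    MapsTo π (dynBall φ n x η) (dynBall ψ n (π x) ε) := fun y hy => by
  rw [mem_dynBall_iff hη] at hy
  rw [mem_dynBall_iff hε]
  intro k hk
  rw [← (hsemi.iterate_right k).eq, ← (hsemi.iterate_right k).eq]
  exact hπ (hy k hk)

end Dynamics

lemma limsup_ofReal_log_div_log_le {G H : ℕ → ℕ} (K : ℕ) (h : ∀ᶠ n in atTop, G n ≤ K * H n) :
    limsup (fun n : ℕ => ENNReal.ofReal (Real.log (G n) / Real.log n)) atTop ≤
      limsup (fun n : ℕ => ENNReal.ofReal (Real.log (H n) / Real.log n)) atTop := by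
  have hK : Tendsto (fun n : ℕ => ENNReal.ofReal (Real.log K / Real.log n)) atTop (𝓝 0) := by
    simpa using ENNReal.tendsto_ofReal (tendsto_const_nhds.div_atTop
      (Real.tendsto_log_atTop.comp tendsto_natCast_atTop_atTop))
  have hlog : ∀ n, G n ≤ K * H n → Real.log (G n) ≤ Real.log K + Real.log (H n) := by
    intro n hn
    rcases (G n).eq_zero_or_pos with h0 | hpos
    · rw [h0, Nat.cast_zero, Real.log_zero]
      exact add_nonneg (Real.log_natCast_nonneg K) (Real.log_natCast_nonneg _)
    obtain ⟨hK0, hH0⟩ := mul_ne_zero_iff.1 (hpos.trans_le hn).ne'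
    rw [← Real.log_mul (Nat.cast_ne_zero.2 hK0) (Nat.cast_ne_zero.2 hH0)]
    exact Real.log_le_log (by exact_mod_cast hpos) (by exact_mod_cast hn)
  calc _ ≤ limsup ((fun n : ℕ => ENNReal.ofReal (Real.log K / Real.log n)) +
        fun n : ℕ => ENNReal.ofReal (Real.log (H n) / Real.log n)) atTop := by
        refine limsup_le_limsup (h.mono fun n hn => ?_)
        refine (ENNReal.ofReal_le_ofReal ?_).trans ENNReal.ofReal_add_le
        rw [← add_div]
        exact div_le_div_of_nonneg_right (hlog n hn) (Real.log_natCast_nonneg n)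
    _ = _ := ENNReal.limsup_add_of_left_tendsto_zero hK _

lemma upperComplexity_le_of_coverNum_le {Y Z : Type*} [MetricSpace Y] [MetricSpace Z]
    {φ : Y → Y} {ψ : Z → Z} {S : Set Y} {T : Set Z}
    (h : ∀ ε > 0, ∃ δ > 0, ∃ K : ℕ, ∀ᶠ n in atTop, coverNum φ n S ε ≤ K * coverNum ψ n T δ) :
    upperComplexity φ S ≤ upperComplexity ψ T := by
  refine iSup₂_le fun ε hε => ?_
  obtain ⟨δ, hδ, K, hK⟩ := h ε hε
  exact (limsup_ofReal_log_div_log_le K hK).trans (le_iSup₂ (f := fun (δ : ℝ) (_ : 0 < δ) =>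
    limsup (fun n : ℕ => ENNReal.ofReal (Real.log (coverNum ψ n T δ) / Real.log n)) atTop) δ hδ)

lemma upperComplexity_le_of_semiconj {E X : Type*} [MetricSpace E] [CompactSpace E]
    [MetricSpace X] {φ : E → E} {ψ : X → X} {π : E → X} (hφ : Continuous φ)
    (hπ : UniformContinuous π) (hπs : Function.Surjective π) (hsemi : Function.Semiconj π φ ψ) :
    upperComplexity ψ univ ≤ upperComplexity φ univ := by
  classical
  refine upperComplexity_le_of_coverNum_le fun ε hε => ?_
  obtain ⟨η, hη, hπη⟩ := Metric.uniformContinuous_iff.1 hπ ε hε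
  refine ⟨η, hη, 1, Eventually.of_forall fun n => ?_⟩
  obtain ⟨t, htcard, ht⟩ := exists_card_eq_coverNum hφ n hη
  rw [one_mul, ← htcard]
  refine (coverNum_le_card (t := t.image π) fun x _ => ?_).trans Finset.card_image_le
  obtain ⟨z, rfl⟩ := hπs x
  obtain ⟨w, hw, hzw⟩ := mem_iUnion₂.1 (ht (mem_univ z))
  exact mem_iUnion₂.2 ⟨π w, Finset.mem_image_of_mem π hw, mapsTo_dynBall hsemi hη hε hπη hzw⟩

lemma totallyBounded_univ_of_isometryEquiv {E F Y : Type*} [MetricSpace E] [CompactSpace E]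
    [MetricSpace F] [MetricSpace Y] [Nonempty Y] {S : Set E} (e : S ≃ᵢ Y × F) :
    TotallyBounded (univ : Set F) := by
  let y : Y := Classical.arbitrary Y
  have hι : Isometry fun f : F => (e.symm (y, f) : E) :=
    isometry_subtype_coe.comp <| e.symm.isometry.comp <|
      Isometry.of_dist_eq fun f f' => by simp [Prod.dist_eq]
  exact totallyBounded_preimage hι.isUniformInducing isCompact_univ.totallyBounded

section ContractingFibered

variable {E X F : Type*} [MetricSpace E] [MetricSpace X] [MetricSpace F] {π : E → X} {m : ℕ}
  {U : Fin m → Set X} {triv : ∀ i : Fin m, π ⁻¹' (U i) ≃ᵢ (U i × F)}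

def IsFiberContracting (φ : E → E) (triv : ∀ i : Fin m, π ⁻¹' (U i) ≃ᵢ (U i × F)) : Prop :=
  ∀ (i j : Fin m) (z z' : E) (hz : z ∈ π ⁻¹' (U i)) (hz' : z' ∈ π ⁻¹' (U i))
    (hfz : φ z ∈ π ⁻¹' (U j)) (hfz' : φ z' ∈ π ⁻¹' (U j)),
    dist (triv j ⟨φ z, hfz⟩).2 (triv j ⟨φ z', hfz'⟩).2 ≤ dist (triv i ⟨z, hz⟩).2 (triv i ⟨z', hz'⟩).2

lemma exists_finset_fiber_net [CompactSpace E] (hUcover : ⋃ i, U i = univ)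
    (triv : ∀ i : Fin m, π ⁻¹' (U i) ≃ᵢ (U i × F)) {r : ℝ} (hr : 0 < r) :
    ∃ net : Finset F, ∀ i (z : π ⁻¹' (U i)), ∃ f ∈ net, dist (triv i z).2 f < r := by
  rcases isEmpty_or_nonempty E with _ | ⟨⟨z₀⟩⟩
  · exact ⟨∅, fun i z => isEmptyElim (z : E)⟩
  obtain ⟨i₀, hi₀⟩ := mem_iUnion.1 (hUcover.ge (mem_univ (π z₀)))
  have : Nonempty (U i₀) := ⟨⟨π z₀, hi₀⟩⟩
  obtain ⟨net, -, hfin, hnet⟩ :=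
    finite_approx_of_totallyBounded (totallyBounded_univ_of_isometryEquiv (triv i₀)) r hr
  refine ⟨hfin.toFinset, fun i z => ?_⟩
  obtain ⟨f, hf, hzf⟩ := mem_iUnion₂.1 (hnet (mem_univ (triv i z).2))
  exact ⟨f, hfin.mem_toFinset.2 hf, hzf⟩

lemma dist_eq_max_dist_fiber (htriv : ∀ i z, ((triv i z).1 : X) = π z) {i : Fin m}
    (z z' : π ⁻¹' (U i)) :
    dist (z : E) z' = max (dist (π z) (π z')) (dist (triv i z).2 (triv i z').2) := by
  rw [← Subtype.dist_eq, ← (triv i).dist_eq, Prod.dist_eq, Subtype.dist_eq, htriv, htriv]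

lemma dist_fiber_iterate_le {φ : E → E} (hcontract : IsFiberContracting φ triv) (c : ℕ → Fin m)
    {n : ℕ} {y z : E} (hy : ∀ k < n, φ^[k] y ∈ π ⁻¹' (U (c k)))
    (hz : ∀ k < n, φ^[k] z ∈ π ⁻¹' (U (c k))) :
    ∀ k (hk : k < n), dist (triv (c k) ⟨_, hy k hk⟩).2 (triv (c k) ⟨_, hz k hk⟩).2 ≤
      dist (triv (c 0) ⟨y, hy 0 (k.zero_le.trans_lt hk)⟩).2
        (triv (c 0) ⟨z, hz 0 (k.zero_le.trans_lt hk)⟩).2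
  | 0, _ => le_rfl
  | k + 1, hk => by
    have hy' := hy (k + 1) hk
    have hz' := hz (k + 1) hk
    rw [Function.iterate_succ_apply'] at hy' hz'
    refine le_trans ?_ (dist_fiber_iterate_le hcontract c hy hz k (k.lt_succ_self.trans hk))
    simp only [Function.iterate_succ_apply']
    exact hcontract _ _ _ _ _ _ hy' hz'

lemma mem_dynBall_of_mem_dynBall_proj {φ : E → E} {ψ : X → X}
    (htriv : ∀ i z, ((triv i z).1 : X) = π z) (hcontract : IsFiberContracting φ triv)
    (hsemi : Function.Semiconj π φ ψ) {L : X → Fin m} {r : ℝ} (hr : 0 < r)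
    (hL : ∀ x, ball x r ⊆ U (L x)) {n : ℕ} {a : X} {y z : E} (hya : π y = a)
    (hbase : π z ∈ dynBall ψ n a r)
    (hfib : ∀ hy hz, dist (triv (L a) ⟨y, hy⟩).2 (triv (L a) ⟨z, hz⟩).2 < r) :
    z ∈ dynBall φ n y r := by
  subst hya
  rw [mem_dynBall_iff hr] at hbase ⊢
  have hproj : ∀ k w, π (φ^[k] w) = ψ^[k] (π w) := fun k => (hsemi.iterate_right k).eq
  let c k := L (ψ^[k] (π y))
  have hy : ∀ k < n, φ^[k] y ∈ π ⁻¹' (U (c k)) := fun k _ => by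
    rw [mem_preimage, hproj]
    exact hL _ (mem_ball_self hr)
  have hz : ∀ k < n, φ^[k] z ∈ π ⁻¹' (U (c k)) := fun k hk => by
    rw [mem_preimage, hproj]
    exact hL _ (mem_ball'.2 (hbase k hk))
  intro k hk
  refine (dist_eq_max_dist_fiber htriv ⟨_, hy k hk⟩ ⟨_, hz k hk⟩).trans_lt (max_lt ?_ ?_)
  · change dist (π (φ^[k] y)) (π (φ^[k] z)) < r
    rw [hproj, hproj]
    exact hbase k hk
  · exact (dist_fiber_iterate_le hcontract c hy hz k hk).trans_lt (hfib _ _)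

lemma exists_dynCover_card_le_mul {φ : E → E} {ψ : X → X}
    (htriv : ∀ i z, ((triv i z).1 : X) = π z) (hcontract : IsFiberContracting φ triv)
    (hsemi : Function.Semiconj π φ ψ) {L : X → Fin m} {r : ℝ} (hr : 0 < r)
    (hL : ∀ x, ball x r ⊆ U (L x)) {n : ℕ} (hn : 0 < n) {t : Finset X}
    (ht : univ ⊆ ⋃ a ∈ t, dynBall ψ n a r) {net : Finset F}
    (hnet : ∀ i (z : π ⁻¹' (U i)), ∃ f ∈ net, dist (triv i z).2 f < r) :
    ∃ C : Finset E, C.card ≤ net.card * t.card ∧ univ ⊆ ⋃ y ∈ C, dynBall φ n y r := by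
  classical
  let lift (p : X × F) : E := (triv (L p.1)).symm (⟨p.1, hL p.1 (mem_ball_self hr)⟩, p.2)
  refine ⟨(t ×ˢ net).image lift, Finset.card_image_le.trans (by rw [Finset.card_product,
    mul_comm]), fun z _ => ?_⟩
  obtain ⟨a, ha, hza⟩ := mem_iUnion₂.1 (ht (mem_univ (π z)))
  have hz : z ∈ π ⁻¹' (U (L a)) := hL a (mem_ball'.2 ((mem_dynBall_iff hr).1 hza 0 hn))
  obtain ⟨f, hf, hzf⟩ := hnet (L a) ⟨z, hz⟩
  refine mem_iUnion₂.2 ⟨lift (a, f), Finset.mem_image_of_mem _ (Finset.mem_product.2 ⟨ha, hf⟩),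
    mem_dynBall_of_mem_dynBall_proj htriv hcontract hsemi hr hL ?_ hza fun hy _ => ?_⟩
  · rw [← htriv, IsometryEquiv.apply_symm_apply]
  · have hlift : (⟨lift (a, f), hy⟩ : π ⁻¹' (U (L a))) =
        (triv (L a)).symm (⟨a, hL a (mem_ball_self hr)⟩, f) := rfl
    rw [hlift, IsometryEquiv.apply_symm_apply, dist_comm]
    exact hzf

lemma upperComplexity_le_of_isFiberContracting [CompactSpace E] [CompactSpace X] {φ : E → E}
    {ψ : X → X} (hψ : Continuous ψ) (hUopen : ∀ i, IsOpen (U i)) (hUcover : ⋃ i, U i = univ)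
    (htriv : ∀ i z, ((triv i z).1 : X) = π z) (hcontract : IsFiberContracting φ triv)
    (hsemi : Function.Semiconj π φ ψ) :
    upperComplexity φ univ ≤ upperComplexity ψ univ := by
  refine upperComplexity_le_of_coverNum_le fun ε hε => ?_
  obtain ⟨δ, hδ, hleb⟩ := lebesgue_number_lemma_of_metric isCompact_univ hUopen hUcover.ge
  choose L hL using fun x => hleb x (mem_univ x)
  have hr : 0 < min ε δ := lt_min hε hδ
  have hLr : ∀ x, ball x (min ε δ) ⊆ U (L x) :=
    fun x => (ball_subset_ball (min_le_right ε δ)).trans (hL x)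
  obtain ⟨net, hnet⟩ := exists_finset_fiber_net hUcover triv hr
  refine ⟨min ε δ, hr, net.card, (eventually_gt_atTop 0).mono fun n hn => ?_⟩
  obtain ⟨t, htcard, ht⟩ := exists_card_eq_coverNum hψ n hr
  obtain ⟨C, hCcard, hC⟩ := exists_dynCover_card_le_mul htriv hcontract hsemi hr hLr hn ht hnet
  calc coverNum φ n univ ε ≤ C.card := coverNum_le_card (hC.trans (iUnion₂_mono fun y _ w hw =>
        lt_of_lt_of_le hw (min_le_left ε δ)))
    _ ≤ net.card * coverNum ψ n univ (min ε δ) := htcard ▸ hCcard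

end ContractingFibered

/-- if `(E,φ)` has a contracting fibered structure over `(X,ψ)`, then
`C(φ) = C(ψ)`. The structure consists of: a continuous surjection `π : E → X` with
`ψ ∘ π = π ∘ φ`, a metric space fiber `F`, a finite open covering `(U i)` of `X`, and
isometric trivializations `π⁻¹(U i) ≃ᵢ U i × F` over `π`, such that the fiber components
are (weakly) contracted by `φ`. -/
theorem contractingFibered_upperComplexity_eq {E X F : Type*}
    [MetricSpace E] [CompactSpace E] [MetricSpace X] [CompactSpace X] [MetricSpace F]
    (φ : E → E) (hφ : Continuous φ) (ψ : X → X) (hψ : Continuous ψ)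
    (π : E → X) (hπc : Continuous π) (hπs : Function.Surjective π)
    (hfactor : ψ ∘ π = π ∘ φ)
    (m : ℕ) (U : Fin m → Set X) (hUopen : ∀ i, IsOpen (U i)) (hUcover : ⋃ i, U i = Set.univ)
    (triv : ∀ i : Fin m, IsometryEquiv ↥(π ⁻¹' (U i)) (↥(U i) × F))
    (htriv : ∀ (i : Fin m) (z : ↥(π ⁻¹' (U i))), ((triv i z).1 : X) = π (z : E))
    (hcontract : ∀ (i j : Fin m) (z z' : E) (hz : z ∈ π ⁻¹' (U i)) (hz' : z' ∈ π ⁻¹' (U i))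
      (hfz : φ z ∈ π ⁻¹' (U j)) (hfz' : φ z' ∈ π ⁻¹' (U j)),
      dist (triv j ⟨φ z, hfz⟩).2 (triv j ⟨φ z', hfz'⟩).2
        ≤ dist (triv i ⟨z, hz⟩).2 (triv i ⟨z', hz'⟩).2) :
    upperComplexity φ Set.univ = upperComplexity ψ Set.univ := by
  have hsemi : Function.Semiconj π φ ψ := fun z => (congrFun hfactor z).symm
  exact le_antisymm
    (upperComplexity_le_of_isFiberContracting hψ hUopen hUcover htriv hcontract hsemi)
    (upperComplexity_le_of_semiconj hφ (CompactSpace.uniformContinuous_of_continuous hπc) hπs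
      hsemi)
end
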